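/- arXiv:2507.09727 — 14 statements merged into one kernel-verified Lean document; each statement's English description precedes it below -/
import Mathlib

section
/- Let n, k be natural numbers with k ≥ 1, and let κ, μ : Fin n → ℝ be two families of real numbers such that κ_α · κ_β = μ_α · μ_β for all indices α ≠ β. Then σ_{2k}(κ) = σ_{2k}(μ), i.e. every even elementary symmetric function of κ is determined by the pairwise products of distinct entries of κ. -/
/-- The `m`-th elementary symmetric function of the family `κ : Fin n → ℝ`:
the sum over all `m`-element subsets `S` of `Fin n` of `∏ i ∈ S, κ i`. -/
noncomputable def esymmFun (n m : ℕ) (κ : Fin n → ℝ) : ℝ :=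
  ∑ S ∈ Finset.powersetCard m (Finset.univ : Finset (Fin n)), ∏ i ∈ S, κ i

lemma prod_eq_of_pairwise {n : ℕ} (κ μ : Fin n → ℝ)
    (h : ∀ α β : Fin n, α ≠ β → κ α * κ β = μ α * μ β) :
    ∀ (k : ℕ) (S : Finset (Fin n)), S.card = 2 * k →
      ∏ i ∈ S, κ i = ∏ i ∈ S, μ i := by
  intro k
  induction k with
  | zero =>
    intro S hS
    simp only [Nat.mul_zero, Finset.card_eq_zero] at hS
    simp [hS]
  | succ k ih =>
    intro S hS
    have hpos : 0 < S.card := by omega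
    obtain ⟨a, ha⟩ := Finset.card_pos.mp hpos
    have hpos2 : 0 < (S.erase a).card := by
      rw [Finset.card_erase_of_mem ha]; omega
    obtain ⟨b, hb⟩ := Finset.card_pos.mp hpos2
    have hab : a ≠ b := fun e => (Finset.ne_of_mem_erase hb) e.symm
    have hcard : ((S.erase a).erase b).card = 2 * k := by
      rw [Finset.card_erase_of_mem hb, Finset.card_erase_of_mem ha]; omega
    rw [← Finset.mul_prod_erase S κ ha, ← Finset.mul_prod_erase (S.erase a) κ hb,
        ← Finset.mul_prod_erase S μ ha, ← Finset.mul_prod_erase (S.erase a) μ hb,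
        ← mul_assoc, ← mul_assoc, h a b hab, ih _ hcard]

theorem stmt_0 (n k : ℕ) (hk : 1 ≤ k) (κ μ : Fin n → ℝ)
    (h : ∀ α β : Fin n, α ≠ β → κ α * κ β = μ α * μ β) :
    esymmFun n (2 * k) κ = esymmFun n (2 * k) μ := by
  unfold esymmFun
  refine Finset.sum_congr rfl fun S hS => ?_
  exact prod_eq_of_pairwise κ μ h k S (Finset.mem_powersetCard.mp hS).2
end

section
/- Let n, k, l be natural numbers with k + l ≥ 1, and let κ, μ : Fin n → ℝ be two families of real numbers such that κ_α · κ_β = μ_α · μ_β for all indices α ≠ β. Then σ_{2k+1}(κ) · σ_{2l+1}(κ) = σ_{2k+1}(μ) · σ_{2l+1}(μ), i.e. the product of any two odd elementary symmetric functions (not both equal to σ_1) is determined by the pairwise products of distinct entries. -/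
open Finset

section PairwiseProducts

variable {ι R : Type*} {κ μ : ι → R}

theorem sq_eq_sq_of_pairwise_mul_eq [CommRing R] [IsDomain R]
    (h : ∀ α β, α ≠ β → κ α * κ β = μ α * μ β) {α β γ : ι}
    (hαβ : α ≠ β) (hαγ : α ≠ γ) (hβγ : β ≠ γ) (hβ : κ β ≠ 0) (hγ : κ γ ≠ 0) :
    μ α ^ 2 = κ α ^ 2 := by
  refine mul_right_cancel₀ (mul_ne_zero hβ hγ) ?_
  calc μ α ^ 2 * (κ β * κ γ) = (μ α * μ β) * (μ α * μ γ) := by rw [h β γ hβγ]; ring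
    _ = κ α ^ 2 * (κ β * κ γ) := by rw [← h α β hαβ, ← h α γ hαγ]; ring

theorem eq_or_eq_neg_of_pairwise_mul_eq [CommRing R] [IsDomain R]
    (h : ∀ α β, α ≠ β → κ α * κ β = μ α * μ β) {α β γ : ι}
    (hαβ : α ≠ β) (hαγ : α ≠ γ) (hβγ : β ≠ γ) (hα : κ α ≠ 0) (hβ : κ β ≠ 0) (hγ : κ γ ≠ 0) :
    μ = κ ∨ μ = -κ := by
  have hcancel : ∀ c : R, c * c = 1 → μ α = c * κ α → μ = fun i ↦ c * κ i := by
    intro c hc2 hc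
    funext i
    rcases eq_or_ne i α with rfl | hi
    · exact hc
    · refine mul_right_cancel₀ hα ?_
      have hiα : κ i * κ α = μ i * (c * κ α) := hc ▸ h i α hi
      linear_combination (-c) * hiα - (μ i * κ α) * hc2
  obtain hs | hs := sq_eq_sq_iff_eq_or_eq_neg.mp (sq_eq_sq_of_pairwise_mul_eq h hαβ hαγ hβγ hβ hγ)
  · exact .inl ((hcancel 1 (one_mul 1) (by rw [hs, one_mul])).trans (funext fun i ↦ one_mul _))
  · refine .inr ((hcancel (-1) (by norm_num) (by rw [hs, neg_one_mul])).trans ?_)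
    exact funext fun i ↦ neg_one_mul _

theorem two_lt_card_filter_ne_zero_of_pairwise_mul_eq [Fintype ι] [MulZeroClass R]
    [NoZeroDivisors R] [DecidableEq R] (h : ∀ α β, α ≠ β → κ α * κ β = μ α * μ β)
    (hκ : 2 < #{i | κ i ≠ 0}) : 2 < #{i | μ i ≠ 0} := by
  obtain ⟨α, hα, β, hβ, γ, hγ, hαβ, hαγ, hβγ⟩ := two_lt_card.mp hκ
  simp only [mem_filter, mem_univ, true_and] at hα hβ hγ
  have hμαβ : μ α * μ β ≠ 0 := h α β hαβ ▸ mul_ne_zero hα hβ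
  have hμβγ : μ β * μ γ ≠ 0 := h β γ hβγ ▸ mul_ne_zero hβ hγ
  refine two_lt_card.mpr ⟨α, ?_, β, ?_, γ, ?_, hαβ, hαγ, hβγ⟩ <;>
    simp only [mem_filter, mem_univ, true_and]
  exacts [left_ne_zero_of_mul hμαβ, right_ne_zero_of_mul hμαβ, right_ne_zero_of_mul hμβγ]

end PairwiseProducts

theorem esymmFun_eq_zero_of_card_lt {n m : ℕ} {κ : Fin n → ℝ} (h : #{i | κ i ≠ 0} < m) :
    esymmFun n m κ = 0 := by
  refine sum_eq_zero fun S hS ↦ ?_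
  rw [mem_powersetCard] at hS
  obtain ⟨i, hiS, hi⟩ := not_subset.mp fun hsub ↦ (card_le_card hsub).not_gt (hS.2 ▸ h)
  exact prod_eq_zero hiS (by simpa using hi)

theorem esymmFun_neg (n m : ℕ) (κ : Fin n → ℝ) :
    esymmFun n m (-κ) = (-1) ^ m * esymmFun n m κ := by
  rw [esymmFun, esymmFun, mul_sum]
  refine sum_congr rfl fun S hS ↦ ?_
  rw [Pi.neg_def, prod_neg, (mem_powersetCard.mp hS).2]

theorem stmt_1 (n k l : ℕ) (hkl : 1 ≤ k + l) (κ μ : Fin n → ℝ)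
    (h : ∀ α β : Fin n, α ≠ β → κ α * κ β = μ α * μ β) :
    esymmFun n (2 * k + 1) κ * esymmFun n (2 * l + 1) κ =
      esymmFun n (2 * k + 1) μ * esymmFun n (2 * l + 1) μ := by
  by_cases hκ : 2 < #{i | κ i ≠ 0}
  · obtain ⟨α, hα, β, hβ, γ, hγ, hαβ, hαγ, hβγ⟩ := two_lt_card.mp hκ
    simp only [mem_filter, mem_univ, true_and] at hα hβ hγ
    obtain rfl | rfl := eq_or_eq_neg_of_pairwise_mul_eq h hαβ hαγ hβγ hα hβ hγ
    · rfl
    · rw [esymmFun_neg, esymmFun_neg, (odd_two_mul_add_one k).neg_one_pow,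
        (odd_two_mul_add_one l).neg_one_pow, neg_one_mul, neg_one_mul, neg_mul_neg]
  · have hμ : ¬ 2 < #{i | μ i ≠ 0} := fun hμ ↦
      hκ (two_lt_card_filter_ne_zero_of_pairwise_mul_eq (fun α β hαβ ↦ (h α β hαβ).symm) hμ)
    obtain hk | hl : 1 ≤ k ∨ 1 ≤ l := by omega
    · rw [esymmFun_eq_zero_of_card_lt (κ := κ) (m := 2 * k + 1) (by omega),
        esymmFun_eq_zero_of_card_lt (κ := μ) (m := 2 * k + 1) (by omega), zero_mul, zero_mul]
    · rw [esymmFun_eq_zero_of_card_lt (κ := κ) (m := 2 * l + 1) (by omega),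
        esymmFun_eq_zero_of_card_lt (κ := μ) (m := 2 * l + 1) (by omega), mul_zero, mul_zero]
end

section
/- For all natural numbers n, k, l with k + l ≥ 1, there exists a multivariate polynomial P with real coefficients in variables p_{αβ} indexed by unordered pairs of distinct elements α, β of Fin n, such that P is of (weighted) total degree at most k + l + 1 in these variables and, for every κ : Fin n → ℝ, evaluating P at p_{αβ} = κ_α · κ_β gives σ_{2k+1}(κ) · σ_{2l+1}(κ). -/
open Finset MvPolynomial

variable {ι R : Type*}

theorem List.Pairwise.getElem_ne_getElem_add_of_count_le [LinearOrder ι] {L : List ι}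
    (hL : L.Pairwise (· ≤ ·)) {m : ℕ} (hcount : ∀ a, L.count a ≤ m) {i : ℕ}
    (hi : i + m < L.length) : L[i] ≠ L[i + m] := by
  intro heq
  have mono : ∀ {p q : ℕ} (hp : p < L.length) (hq : q < L.length), p ≤ q → L[p] ≤ L[q] :=
    fun hp hq hpq => hL.rel_get_of_le (a := ⟨_, hp⟩) (b := ⟨_, hq⟩) hpq
  have hrun : (L.drop i).take (m + 1) = List.replicate (m + 1) L[i] := by
    refine List.eq_replicate_iff.2
      ⟨by simp only [List.length_take, List.length_drop]; omega, fun b hb => ?_⟩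
    obtain ⟨j, hj, rfl⟩ := List.getElem_of_mem hb
    simp only [List.length_take, List.length_drop] at hj
    simp only [List.getElem_take, List.getElem_drop]
    exact le_antisymm (heq ▸ mono _ _ (by omega)) (mono _ _ (by omega))
  have hsub : (List.replicate (m + 1) L[i]).Sublist L :=
    hrun ▸ ((L.drop i).take_sublist _).trans (L.drop_sublist i)
  have := (List.replicate_sublist_iff.1 hsub).trans (hcount L[i])
  omega

theorem Multiset.exists_pairing_of_count_le [LinearOrder ι] {m : ℕ} (M : Multiset ι)
    (hcard : card M = m + m) (hcount : ∀ a, M.count a ≤ m) :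
    ∃ f g : Fin m → ι, (∀ i, f i ≠ g i) ∧ M = univ.val.map f + univ.val.map g := by
  set L := M.sort (· ≤ ·)
  have hlen : L.length = m + m := by rw [Multiset.length_sort, hcard]
  have hML : (L : Multiset ι) = M := M.sort_eq _
  refine ⟨fun i => L[i.1], fun i => L[i.1 + m],
    fun i => (M.pairwise_sort _).getElem_ne_getElem_add_of_count_le (fun a => ?_) _, ?_⟩
  · rw [← Multiset.coe_count, hML]; exact hcount a
  · have hsplit :
        L = List.ofFn (fun i : Fin m => L[i.1]) ++ List.ofFn (fun i : Fin m => L[i.1 + m]) := by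
      refine List.ext_getElem (by simp [hlen]) fun j h₁ h₂ => ?_
      simp only [List.getElem_append, List.getElem_ofFn, List.length_ofFn]
      split_ifs with hj
      · rfl
      · congr 1; omega
    rw [Fin.univ_val_map, Fin.univ_val_map, Multiset.coe_add, ← hsplit, hML]

section
variable [CommSemiring R]

def pairProducts (κ : ι → R) (q : {p : Sym2 ι // ¬ p.IsDiag}) : R :=
  Sym2.lift ⟨fun a b => κ a * κ b, fun a b => mul_comm (κ a) (κ b)⟩ q.1

def IsPairPolynomial (d : ℕ) (F : (ι → R) → R) : Prop :=
  ∃ P : MvPolynomial {p : Sym2 ι // ¬ p.IsDiag} R,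
    P.totalDegree ≤ d ∧ ∀ κ, eval (pairProducts κ) P = F κ

theorem IsPairPolynomial.sum {α : Type*} {d : ℕ} (s : Finset α) {F : α → (ι → R) → R}
    (h : ∀ a ∈ s, IsPairPolynomial d (F a)) :
    IsPairPolynomial d (fun κ => ∑ a ∈ s, F a κ) := by
  choose! P hdeg hP using h
  exact ⟨∑ a ∈ s, P a, (totalDegree_finsetSum _ _).trans (Finset.sup_le hdeg),
    fun κ => by simp only [map_sum]; exact sum_congr rfl fun a ha => hP a ha κ⟩

theorem isPairPolynomial_prod_map [LinearOrder ι] {m : ℕ} (M : Multiset ι)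
    (hcard : M.card = m + m) (hcount : ∀ a, M.count a ≤ m) :
    IsPairPolynomial m (fun κ : ι → R => (M.map κ).prod) := by
  obtain ⟨f, g, hfg, rfl⟩ := M.exists_pairing_of_count_le hcard hcount
  refine ⟨∏ i, X ⟨s(f i, g i), by simpa using hfg i⟩, ?_, fun κ => ?_⟩
  · refine (totalDegree_finsetProd _ _).trans ?_
    calc ∑ i, (X _ : MvPolynomial _ R).totalDegree ≤ ∑ _i : Fin m, 1 :=
          sum_le_sum fun i _ => (totalDegree_monomial_le _ _).trans (by simp)
      _ = m := by simp
  · rw [map_prod]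
    simp only [eval_X, pairProducts, Sym2.lift_mk, prod_mul_distrib, Multiset.map_add,
      Multiset.prod_add, Multiset.map_map, ← prod_eq_multiset_prod, Function.comp_apply]

end

theorem esymmFun_mul_esymmFun (n a b : ℕ) (κ : Fin n → ℝ) :
    esymmFun n a κ * esymmFun n b κ =
      ∑ ST ∈ powersetCard a univ ×ˢ powersetCard b univ, ((ST.1.val + ST.2.val).map κ).prod := by
  simp only [esymmFun, sum_mul_sum, ← sum_product', Multiset.map_add, Multiset.prod_add,
    prod_eq_multiset_prod]

theorem stmt_2 (n k l : ℕ) (hkl : 1 ≤ k + l) :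
    ∃ P : MvPolynomial {p : Sym2 (Fin n) // ¬ p.IsDiag} ℝ,
      P.totalDegree ≤ k + l + 1 ∧
      ∀ κ : Fin n → ℝ,
        MvPolynomial.eval
          (fun q : {p : Sym2 (Fin n) // ¬ p.IsDiag} =>
            Sym2.lift ⟨fun a b => κ a * κ b, fun a b => mul_comm (κ a) (κ b)⟩ q.1) P =
        esymmFun n (2 * k + 1) κ * esymmFun n (2 * l + 1) κ := by
  have key : IsPairPolynomial (k + l + 1)
      (fun κ : Fin n → ℝ => esymmFun n (2 * k + 1) κ * esymmFun n (2 * l + 1) κ) := by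
    simp only [esymmFun_mul_esymmFun]
    refine IsPairPolynomial.sum _ fun ST hST => isPairPolynomial_prod_map _ ?_ fun a => ?_
    · simp only [mem_product, mem_powersetCard] at hST
      rw [Multiset.card_add, card_val, card_val, hST.1.2, hST.2.2]
      omega
    · have hS := Multiset.nodup_iff_count_le_one.1 ST.1.nodup a
      have hT := Multiset.nodup_iff_count_le_one.1 ST.2.nodup a
      rw [Multiset.count_add]
      omega
  exact key
end

section
/- For all natural numbers n and k with k ≥ 1, there exists a multivariate polynomial P with real coefficients in variables p_{αβ} indexed by unordered pairs of distinct elements α, β of Fin n, such that for every κ : Fin n → ℝ, evaluating P at p_{αβ} = κ_α · κ_β gives σ_{2k}(κ). -/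
/-- Pair up consecutive elements of a list into `Sym2` variables. -/
noncomputable def pairPoly (n : ℕ) :
    List (Fin n) → MvPolynomial {p : Sym2 (Fin n) // ¬ p.IsDiag} ℝ
  | [] => 1
  | [_] => 0
  | a :: b :: t =>
      if h : a ≠ b then
        MvPolynomial.X ⟨s(a, b), by simpa using h⟩ * pairPoly n t
      else 0

theorem eval_pairPoly (n : ℕ) (κ : Fin n → ℝ) :
    ∀ l : List (Fin n), l.Nodup → Even l.length →
      MvPolynomial.eval
        (fun q : {p : Sym2 (Fin n) // ¬ p.IsDiag} =>
          Sym2.lift ⟨fun a b => κ a * κ b, fun a b => mul_comm (κ a) (κ b)⟩ q.1)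
        (pairPoly n l) = (l.map κ).prod
  | [], _, _ => by simp [pairPoly]
  | [a], _, he => by simp at he
  | a :: b :: t, hn, he => by
      have hab : a ≠ b := by simp at hn; tauto
      have hn' : t.Nodup := by simp_all
      have he' : Even t.length := by
        simpa [Nat.even_add_one, parity_simps] using he
      rw [pairPoly, dif_pos hab, map_mul, eval_pairPoly n κ t hn' he']
      simp [mul_assoc]

theorem stmt_3 (n k : ℕ) (hk : 1 ≤ k) :
    ∃ P : MvPolynomial {p : Sym2 (Fin n) // ¬ p.IsDiag} ℝ,
      ∀ κ : Fin n → ℝ,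
        MvPolynomial.eval
          (fun q : {p : Sym2 (Fin n) // ¬ p.IsDiag} =>
            Sym2.lift ⟨fun a b => κ a * κ b, fun a b => mul_comm (κ a) (κ b)⟩ q.1) P =
        esymmFun n (2 * k) κ := by
  refine ⟨∑ S ∈ Finset.powersetCard (2 * k) (Finset.univ : Finset (Fin n)),
    pairPoly n (S.sort (· ≤ ·)), fun κ => ?_⟩
  rw [map_sum, esymmFun]
  refine Finset.sum_congr rfl fun S hS => ?_
  have hcard : (S.sort (· ≤ ·)).length = 2 * k := by
    rw [Finset.length_sort]
    exact (Finset.mem_powersetCard.mp hS).2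
  rw [eval_pairPoly n κ _ (S.sort_nodup _) (by rw [hcard]; exact even_two_mul k)]
  have := (S.sort_perm_toList (· ≤ ·)).map κ
  rw [this.prod_eq, ← Finset.prod_map_toList]
end

section
/- Let n be a natural number and let κ, μ : Fin n → ℝ satisfy κ_α · κ_β = μ_α · μ_β for all indices α ≠ β. If κ has at least three nonzero entries (i.e. there exist pairwise distinct indices i, j, k with κ_i ≠ 0, κ_j ≠ 0, κ_k ≠ 0), then μ = κ or μ = −κ. -/
theorem stmt_5 (n : ℕ) (κ μ : Fin n → ℝ)
    (h : ∀ α β : Fin n, α ≠ β → κ α * κ β = μ α * μ β)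
    (hrank : ∃ i j k : Fin n, i ≠ j ∧ i ≠ k ∧ j ≠ k ∧ κ i ≠ 0 ∧ κ j ≠ 0 ∧ κ k ≠ 0) :
    μ = κ ∨ μ = -κ := by
  obtain ⟨i, j, k, hij, hik, hjk, hki, hkj, hkk⟩ := hrank
  have hjk' : μ j * μ k ≠ 0 := by rw [← h j k hjk]; exact mul_ne_zero hkj hkk
  have e1 := h i j hij
  have e2 := h i k hik
  have e3 := h j k hjk
  have hsq : μ i ^ 2 = κ i ^ 2 := by
    have hc : μ i ^ 2 * (μ j * μ k) = κ i ^ 2 * (μ j * μ k) := by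
      calc μ i ^ 2 * (μ j * μ k) = (μ i * μ j) * (μ i * μ k) := by ring
        _ = (κ i * κ j) * (κ i * κ k) := by rw [e1, e2]
        _ = κ i ^ 2 * (κ j * κ k) := by ring
        _ = κ i ^ 2 * (μ j * μ k) := by rw [e3]
    exact mul_right_cancel₀ hjk' hc
  have hμi : μ i ≠ 0 := by
    intro h0
    apply hki
    have : κ i ^ 2 = 0 := by rw [← hsq, h0]; ring
    exact pow_eq_zero_iff (by norm_num) |>.mp this
  rcases sq_eq_sq_iff_eq_or_eq_neg.mp hsq with hcase | hcase
  · left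
    funext α
    by_cases hα : α = i
    · rw [hα, hcase]
    · have := h α i hα
      rw [hcase] at this
      exact mul_right_cancel₀ hki this.symm
  · right
    funext α
    by_cases hα : α = i
    · rw [hα, hcase]; rfl
    · have := h α i hα
      rw [hcase] at this
      have : μ α * κ i = -κ α * κ i := by linarith [this]
      have := mul_right_cancel₀ hki this
      simpa using this
end

section
/- Let n, k be natural numbers with k ≥ 1, and let κ, μ : Fin n → ℝ satisfy κ_α · κ_β = μ_α · μ_β for all indices α ≠ β. If σ_{2k+1}(κ) = σ_{2k+1}(μ) and σ_{2k+1}(κ) ≠ 0, then κ = μ; in particular σ_{2l+1}(κ) = σ_{2l+1}(μ) for every natural number l. -/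
theorem esymmFun_smul (n m : ℕ) (c : ℝ) (κ : Fin n → ℝ) :
    esymmFun n m (c • κ) = c ^ m * esymmFun n m κ := by
  rw [esymmFun, esymmFun, Finset.mul_sum]
  refine Finset.sum_congr rfl fun S hS => ?_
  rw [Finset.mem_powersetCard] at hS
  simp only [Pi.smul_apply, smul_eq_mul, Finset.prod_mul_distrib, Finset.prod_const, hS.2]

theorem exists_three_ne_zero_of_esymmFun_ne_zero {n m : ℕ} {κ : Fin n → ℝ} (hm : 3 ≤ m)
    (hκ : esymmFun n m κ ≠ 0) :
    ∃ a b c, a ≠ b ∧ a ≠ c ∧ b ≠ c ∧ κ a ≠ 0 ∧ κ b ≠ 0 ∧ κ c ≠ 0 := by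
  obtain ⟨S, hS, hprod⟩ := Finset.exists_ne_zero_of_sum_ne_zero hκ
  rw [Finset.mem_powersetCard] at hS
  obtain ⟨T, hTS, hT⟩ := Finset.exists_subset_card_eq (hS.2 ▸ hm)
  obtain ⟨a, b, c, hab, hac, hbc, rfl⟩ := Finset.card_eq_three.mp hT
  have hS_ne_zero : ∀ i ∈ S, κ i ≠ 0 := Finset.prod_ne_zero_iff.mp hprod
  exact ⟨a, b, c, hab, hac, hbc, hS_ne_zero a (hTS (by simp)), hS_ne_zero b (hTS (by simp)),
    hS_ne_zero c (hTS (by simp))⟩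

section PairwiseProducts

variable {ι K : Type*} [Field K] {κ μ : ι → K}

theorem sq_eq_sq_of_pairwise_mul_eq_mul (h : ∀ α β, α ≠ β → κ α * κ β = μ α * μ β)
    {a b c : ι} (hab : a ≠ b) (hac : a ≠ c) (hbc : b ≠ c) (hb : κ b ≠ 0) (hc : κ c ≠ 0) :
    μ a ^ 2 = κ a ^ 2 := by
  have hprod : (κ a * κ b) * (κ a * κ c) = (μ a * μ b) * (μ a * μ c) := by
    rw [h a b hab, h a c hac]
  refine mul_right_cancel₀ (mul_ne_zero hb hc) ?_
  linear_combination -hprod + μ a ^ 2 * h b c hbc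

theorem exists_sq_eq_one_and_eq_smul_of_pairwise_mul_eq_mul
    (h : ∀ α β, α ≠ β → κ α * κ β = μ α * μ β) {a b c : ι} (hab : a ≠ b) (hac : a ≠ c)
    (hbc : b ≠ c) (ha : κ a ≠ 0) (hb : κ b ≠ 0) (hc : κ c ≠ 0) :
    ∃ ε : K, ε ^ 2 = 1 ∧ μ = ε • κ := by
  have hsq := sq_eq_sq_of_pairwise_mul_eq_mul h hab hac hbc hb hc
  have hε : (μ a / κ a) ^ 2 = 1 := by rw [div_pow, hsq, div_self (pow_ne_zero 2 ha)]
  refine ⟨μ a / κ a, hε, funext fun i => ?_⟩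
  rcases eq_or_ne i a with rfl | hia
  · simp [ha]
  · have hμa : μ a ≠ 0 := fun h0 =>
      ha (pow_eq_zero_iff two_ne_zero |>.mp (by rw [← hsq, h0, zero_pow two_ne_zero]))
    simp only [Pi.smul_apply, smul_eq_mul]
    field_simp
    refine mul_left_cancel₀ hμa ?_
    linear_combination (-κ a) * h a i hia.symm - κ i * hsq

end PairwiseProducts

theorem stmt_6 (n k : ℕ) (hk : 1 ≤ k) (κ μ : Fin n → ℝ)
    (h : ∀ α β : Fin n, α ≠ β → κ α * κ β = μ α * μ β)
    (heq : esymmFun n (2 * k + 1) κ = esymmFun n (2 * k + 1) μ)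
    (hne : esymmFun n (2 * k + 1) κ ≠ 0) :
    κ = μ ∧ ∀ l : ℕ, esymmFun n (2 * l + 1) κ = esymmFun n (2 * l + 1) μ := by
  obtain ⟨a, b, c, hab, hac, hbc, ha, hb, hc⟩ :=
    exists_three_ne_zero_of_esymmFun_ne_zero (by omega) hne
  obtain ⟨ε, hε, rfl⟩ :=
    exists_sq_eq_one_and_eq_smul_of_pairwise_mul_eq_mul h hab hac hbc ha hb hc
  have hε_one : ε = 1 := by
    rw [esymmFun_smul, pow_succ, pow_mul, hε, one_pow, one_mul] at heq
    exact (mul_eq_right₀ hne).mp heq.symm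
  subst hε_one
  simp
end

section
/- Let n be a natural number and let κ, μ : Fin n → ℝ satisfy κ_α · κ_β = μ_α · μ_β for all indices α ≠ β. If κ has at least three nonzero entries, then either σ_{2l+1}(κ) = σ_{2l+1}(μ) for all natural numbers l, or σ_{2l+1}(κ) = −σ_{2l+1}(μ) for all natural numbers l. -/
theorem stmt_7 (n : ℕ) (κ μ : Fin n → ℝ)
    (h : ∀ α β : Fin n, α ≠ β → κ α * κ β = μ α * μ β)
    (hrank : ∃ i j k : Fin n, i ≠ j ∧ i ≠ k ∧ j ≠ k ∧ κ i ≠ 0 ∧ κ j ≠ 0 ∧ κ k ≠ 0) :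
    (∀ l : ℕ, esymmFun n (2 * l + 1) κ = esymmFun n (2 * l + 1) μ) ∨
    (∀ l : ℕ, esymmFun n (2 * l + 1) κ = -esymmFun n (2 * l + 1) μ) := by
  obtain ⟨i, j, k, hij, hik, hjk, hκi, hκj, hκk⟩ := hrank
  have hjk' : μ j * μ k ≠ 0 := by rw [← h j k hjk]; exact mul_ne_zero hκj hκk
  -- μ i ^ 2 = κ i ^ 2
  have hsq : μ i * μ i = κ i * κ i := by
    have h1 := h i j hij
    have h2 := h i k hik
    have h3 := h j k hjk
    have key : (μ i * μ i) * (μ j * μ k) = (κ i * κ i) * (μ j * μ k) := by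
      linear_combination -((κ i * κ k) * h1) - (μ i * μ j) * h2 + (κ i * κ i) * h3
    exact mul_right_cancel₀ hjk' key
  have hμi : μ i = κ i ∨ μ i = -κ i := by
    rcases mul_self_eq_mul_self_iff.mp hsq with h' | h'
    · exact Or.inl h'
    · exact Or.inr h'
  have hμine : μ i ≠ 0 := by
    rcases hμi with h' | h' <;> rw [h'] <;> simpa using hκi
  -- pointwise equality up to sign
  have main : (∀ α, μ α = κ α) ∨ (∀ α, μ α = -κ α) := by
    rcases hμi with h' | h'
    · left
      intro α
      by_cases hαi : α = i
      · rw [hαi, h']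
      · have := h α i hαi
        rw [h'] at this
        exact mul_right_cancel₀ hκi this.symm
    · right
      intro α
      by_cases hαi : α = i
      · rw [hαi, h']
      · have := h α i hαi
        rw [h'] at this
        have : μ α * κ i = -κ α * κ i := by ring_nf; ring_nf at this; linarith
        exact mul_right_cancel₀ hκi this
  rcases main with hm | hm
  · left
    intro l
    unfold esymmFun
    exact Finset.sum_congr rfl fun S _ => Finset.prod_congr rfl fun a _ => (hm a).symm
  · right
    intro l
    unfold esymmFun
    rw [← Finset.sum_neg_distrib]
    refine Finset.sum_congr rfl fun S hS => ?_
    have hcard : S.card = 2 * l + 1 := (Finset.mem_powersetCard.mp hS).2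
    have : ∏ a ∈ S, μ a = ∏ a ∈ S, -κ a :=
      Finset.prod_congr rfl fun a _ => hm a
    have hneg : ∏ a ∈ S, -κ a = (-1 : ℝ) ^ S.card * ∏ a ∈ S, κ a := by
      calc ∏ a ∈ S, -κ a = ∏ a ∈ S, (-1 : ℝ) * κ a := by simp
        _ = (-1 : ℝ) ^ S.card * ∏ a ∈ S, κ a := by
            rw [Finset.prod_mul_distrib, Finset.prod_const]
    rw [this, hneg, hcard]
    simp [pow_succ, pow_mul]
end

section
/- Let n be a natural number and let κ, μ : Fin n → ℝ satisfy κ_α · κ_β = μ_α · μ_β for all indices α ≠ β. If κ has at least three nonzero entries, then ∑_{i} κ_i² = ∑_{i} μ_i², i.e. the squared norm |κ|² is determined by the pairwise products of distinct entries. -/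
theorem stmt_9 (n : ℕ) (κ μ : Fin n → ℝ)
    (h : ∀ α β : Fin n, α ≠ β → κ α * κ β = μ α * μ β)
    (hrank : ∃ i j k : Fin n, i ≠ j ∧ i ≠ k ∧ j ≠ k ∧ κ i ≠ 0 ∧ κ j ≠ 0 ∧ κ k ≠ 0) :
    ∑ i : Fin n, (κ i) ^ 2 = ∑ i : Fin n, (μ i) ^ 2 := by
  obtain ⟨i, j, k, hij, hik, hjk, hi, hj, hk⟩ := hrank
  have key : ∀ α a b : Fin n, α ≠ a → α ≠ b → a ≠ b → κ a ≠ 0 → κ b ≠ 0 →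
      κ α ^ 2 = μ α ^ 2 := by
    intro α a b hαa hαb hab ha hb
    have hc : κ a * κ b ≠ 0 := mul_ne_zero ha hb
    have h1 := h α a hαa
    have h2 := h α b hαb
    have h3 := h a b hab
    refine mul_right_cancel₀ hc ?_
    calc κ α ^ 2 * (κ a * κ b) = (κ α * κ a) * (κ α * κ b) := by ring
      _ = (μ α * μ a) * (μ α * μ b) := by rw [h1, h2]
      _ = μ α ^ 2 * (μ a * μ b) := by ring
      _ = μ α ^ 2 * (κ a * κ b) := by rw [h3]
  refine Finset.sum_congr rfl fun α _ => ?_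
  by_cases hαi : α = i
  · exact key α j k (hαi ▸ hij) (hαi ▸ hik) hjk hj hk
  · by_cases hαj : α = j
    · exact key α i k (hαj ▸ fun e => hij e.symm) (hαj ▸ hjk) hik hi hk
    · exact key α i j hαi hαj hij hi hj
end

section
/- Let n be a natural number and let κ, μ : Fin n → ℝ satisfy κ_α · κ_β = μ_α · μ_β for all indices α ≠ β. If κ has at least three nonzero entries and σ_1(κ) = σ_1(μ) ≠ 0, then κ = μ. -/
lemma esymmFun_one (n : ℕ) (κ : Fin n → ℝ) : esymmFun n 1 κ = ∑ i, κ i := by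
  simp [esymmFun, Finset.powersetCard_one, Finset.sum_map]

theorem stmt_10 (n : ℕ) (κ μ : Fin n → ℝ)
    (h : ∀ α β : Fin n, α ≠ β → κ α * κ β = μ α * μ β)
    (hrank : ∃ i j k : Fin n, i ≠ j ∧ i ≠ k ∧ j ≠ k ∧ κ i ≠ 0 ∧ κ j ≠ 0 ∧ κ k ≠ 0)
    (heq : esymmFun n 1 κ = esymmFun n 1 μ) (hne : esymmFun n 1 κ ≠ 0) :
    κ = μ := by
  obtain ⟨i, j, k, hij, hik, hjk, hκi, hκj, hκk⟩ := hrank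
  have hjkμ : κ j * κ k = μ j * μ k := h j k hjk
  have hijμ : κ i * κ j = μ i * μ j := h i j hij
  have hikμ : κ i * κ k = μ i * μ k := h i k hik
  have hjk0 : μ j * μ k ≠ 0 := by rw [← hjkμ]; exact mul_ne_zero hκj hκk
  have hsq : μ i ^ 2 = κ i ^ 2 := by
    have h1 : (μ i * μ j) * (μ i * μ k) = (κ i * κ j) * (κ i * κ k) := by
      rw [hijμ, hikμ]
    have h2 : μ i ^ 2 * (μ j * μ k) = κ i ^ 2 * (μ j * μ k) := by
      linear_combination h1 + κ i ^ 2 * hjkμ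
    exact mul_right_cancel₀ hjk0 h2
  have hμi : μ i = κ i ∨ μ i = -κ i := sq_eq_sq_iff_eq_or_eq_neg.mp hsq
  rcases hμi with hp | hm
  · funext α
    by_cases hα : α = i
    · rw [hα, hp]
    · have := h α i hα
      rw [hp] at this
      exact mul_right_cancel₀ hκi this
  · exfalso
    have hall : ∀ α, μ α = -κ α := by
      intro α
      by_cases hα : α = i
      · rw [hα, hm]
      · have := h α i hα
        rw [hm] at this
        have : κ α * κ i = (-μ α) * κ i := by linarith [this]
        have := mul_right_cancel₀ hκi this
        linarith
    simp only [esymmFun_one] at heq hne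
    have : ∑ α, μ α = -∑ α, κ α := by
      rw [← Finset.sum_neg_distrib]
      exact Finset.sum_congr rfl fun α _ => hall α
    rw [this] at heq
    exact hne (by linarith)
end

section
/- Let n, r be natural numbers with r odd and r ≥ 3, and let κ, μ : Fin n → ℝ satisfy κ_α · κ_β = μ_α · μ_β for all indices α ≠ β. Then for every index i, κ_i · σ_r(κ) = μ_i · σ_r(μ). -/
lemma even_list_prod {n : ℕ} (κ μ : Fin n → ℝ)
    (h : ∀ α β : Fin n, α ≠ β → κ α * κ β = μ α * μ β) :
    ∀ l : List (Fin n), l.Pairwise (· ≠ ·) → Even l.length →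
      (l.map κ).prod = (l.map μ).prod
  | [], _, _ => by simp
  | [a], _, he => by simp at he
  | a :: b :: t, hp, he => by
    have hab : a ≠ b := (List.pairwise_cons.1 hp).1 b (by simp)
    have ht : t.Pairwise (· ≠ ·) :=
      (List.pairwise_cons.1 (List.pairwise_cons.1 hp).2).2
    have hte : Even t.length := by
      simp only [List.length_cons] at he
      obtain ⟨k, hk⟩ := he
      exact ⟨k - 1, by omega⟩
    have := even_list_prod κ μ h t ht hte
    simp only [List.map_cons, List.prod_cons, ← mul_assoc]
    rw [h a b hab, this]

theorem stmt_11 (n r : ℕ) (hodd : Odd r) (hr : 3 ≤ r) (κ μ : Fin n → ℝ)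
    (h : ∀ α β : Fin n, α ≠ β → κ α * κ β = μ α * μ β) :
    ∀ i : Fin n, κ i * esymmFun n r κ = μ i * esymmFun n r μ := by
  intro i
  unfold esymmFun
  rw [Finset.mul_sum, Finset.mul_sum]
  apply Finset.sum_congr rfl
  intro S hS
  have hcard : S.card = r := (Finset.mem_powersetCard.1 hS).2
  by_cases hi : i ∈ S
  · -- S contains i
    have hTcard : (S.erase i).card = r - 1 := by
      rw [Finset.card_erase_of_mem hi, hcard]
    have hTne : (S.erase i).Nonempty := by
      rw [← Finset.card_pos, hTcard]; omega
    obtain ⟨a, ha⟩ := hTne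
    have hia : i ≠ a := fun hia => (Finset.ne_of_mem_erase ha) hia.symm
    have h1 : ∏ j ∈ S, κ j = κ i * (κ a * ∏ j ∈ (S.erase i).erase a, κ j) := by
      rw [Finset.mul_prod_erase (S.erase i) κ ha, Finset.mul_prod_erase S κ hi]
    have h2 : ∏ j ∈ S, μ j = μ i * (μ a * ∏ j ∈ (S.erase i).erase a, μ j) := by
      rw [Finset.mul_prod_erase (S.erase i) μ ha, Finset.mul_prod_erase S μ hi]
    rw [h1, h2]
    have hnotmem : i ∉ (S.erase i).erase a := fun hmem =>
      Finset.notMem_erase i S (Finset.mem_of_mem_erase hmem)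
    have hpair : (i :: ((S.erase i).erase a).toList).Pairwise (· ≠ ·) := by
      rw [List.pairwise_cons]
      exact ⟨fun b hb hib => hnotmem
        (by rw [show b = i from hib.symm] at hb; exact Finset.mem_toList.1 hb),
        ((S.erase i).erase a).nodup_toList⟩
    have hlen : Even (i :: ((S.erase i).erase a).toList).length := by
      simp only [List.length_cons, Finset.length_toList,
        Finset.card_erase_of_mem ha, hTcard]
      obtain ⟨k, hk⟩ := hodd
      exact ⟨k, by omega⟩
    have heven := even_list_prod κ μ h _ hpair hlen
    simp only [List.map_cons, List.prod_cons, Finset.prod_map_toList] at heven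
    calc κ i * (κ i * (κ a * ∏ j ∈ (S.erase i).erase a, κ j))
        = (κ i * κ a) * (κ i * ∏ j ∈ (S.erase i).erase a, κ j) := by ring
      _ = (μ i * μ a) * (μ i * ∏ j ∈ (S.erase i).erase a, μ j) := by
          rw [h i a hia, heven]
      _ = μ i * (μ i * (μ a * ∏ j ∈ (S.erase i).erase a, μ j)) := by ring
  · -- i ∉ S
    have hpair : (i :: S.toList).Pairwise (· ≠ ·) := by
      rw [List.pairwise_cons]
      exact ⟨fun b hb hib => hi
        (by rw [show b = i from hib.symm] at hb; exact Finset.mem_toList.1 hb),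
        S.nodup_toList⟩
    have hlen : Even (i :: S.toList).length := by
      simp only [List.length_cons, Finset.length_toList, hcard]
      obtain ⟨k, hk⟩ := hodd
      exact ⟨k + 1, by omega⟩
    have heven := even_list_prod κ μ h _ hpair hlen
    simp only [List.map_cons, List.prod_cons, Finset.prod_map_toList] at heven
    exact heven
end

section
/- Let n, l be natural numbers with l ≥ 2, and let κ, μ : Fin n → ℝ satisfy κ_α · κ_β = μ_α · μ_β for all indices α ≠ β. Then σ_{2l}(κ) · ∑_j κ_j² = σ_{2l}(μ) · ∑_j μ_j². -/
lemma esymm_zero_of_small_support (n m : ℕ) (κ : Fin n → ℝ)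
    (hm : (Finset.univ.filter (fun i => κ i ≠ 0)).card < m) :
    esymmFun n m κ = 0 := by
  unfold esymmFun
  apply Finset.sum_eq_zero
  intro S hS
  rw [Finset.mem_powersetCard] at hS
  have hns : ¬ S ⊆ Finset.univ.filter (fun i => κ i ≠ 0) := by
    intro hsub
    have := Finset.card_le_card hsub
    omega
  obtain ⟨i, hiS, hi⟩ := Finset.not_subset.mp hns
  refine Finset.prod_eq_zero hiS ?_
  simpa using hi

theorem stmt_12 (n l : ℕ) (hl : 2 ≤ l) (κ μ : Fin n → ℝ)
    (h : ∀ α β : Fin n, α ≠ β → κ α * κ β = μ α * μ β) :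
    esymmFun n (2 * l) κ * ∑ j : Fin n, (κ j) ^ 2 =
      esymmFun n (2 * l) μ * ∑ j : Fin n, (μ j) ^ 2 := by
  by_cases hex : ∃ a b c : Fin n, a ≠ b ∧ a ≠ c ∧ b ≠ c ∧ κ a ≠ 0 ∧ κ b ≠ 0 ∧ κ c ≠ 0
  · obtain ⟨a, b, c, hab, hac, hbc, ha, hb, hc⟩ := hex
    have hba := h b a hab.symm
    have hca := h c a hac.symm
    have hcb := h c b hbc.symm
    have hmba : μ b * μ a ≠ 0 := by rw [← hba]; exact mul_ne_zero hb ha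
    have hma : μ a ≠ 0 := fun h0 => hmba (by rw [h0, mul_zero])
    have hmb : μ b ≠ 0 := fun h0 => hmba (by rw [h0, zero_mul])
    have hmca : μ c * μ a ≠ 0 := by rw [← hca]; exact mul_ne_zero hc ha
    have hmc : μ c ≠ 0 := fun h0 => hmca (by rw [h0, zero_mul])
    have hsq : κ a ^ 2 = μ a ^ 2 := by
      have h4 : κ a ^ 2 * (μ c * μ b) = μ a ^ 2 * (μ c * μ b) := by
        linear_combination (κ c * κ a) * hba + (μ b * μ a) * hca - (κ a ^ 2) * hcb
      exact mul_right_cancel₀ (mul_ne_zero hmc hmb) h4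
    set t := κ a / μ a with ht
    have ht2 : t ^ 2 = 1 := by
      rw [ht, div_pow, hsq, div_self (pow_ne_zero 2 hma)]
    have hk : ∀ j, κ j = t * μ j := by
      intro j
      by_cases hj : j = a
      · subst hj; rw [ht, div_mul_cancel₀ _ hma]
      · have hja := h j a hj
        have key : κ j * μ a = μ j * κ a := by
          have h6 : κ j * μ a * μ a = μ j * κ a * μ a := by
            linear_combination κ a * hja - κ j * hsq
          exact mul_right_cancel₀ hma h6
        rw [ht]
        field_simp
        linarith [key]
    have hsum : ∑ j : Fin n, κ j ^ 2 = ∑ j : Fin n, μ j ^ 2 := by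
      apply Finset.sum_congr rfl
      intro j _
      rw [hk j, mul_pow, ht2, one_mul]
    have hes : esymmFun n (2 * l) κ = esymmFun n (2 * l) μ := by
      unfold esymmFun
      apply Finset.sum_congr rfl
      intro S hS
      rw [Finset.mem_powersetCard] at hS
      calc ∏ i ∈ S, κ i = ∏ i ∈ S, (t * μ i) :=
            Finset.prod_congr rfl (fun i _ => hk i)
        _ = t ^ S.card * ∏ i ∈ S, μ i := by
            rw [Finset.prod_mul_distrib, Finset.prod_const]
        _ = ∏ i ∈ S, μ i := by rw [hS.2, pow_mul, ht2, one_pow, one_mul]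
    rw [hsum, hes]
  · push_neg at hex
    have hkcard : (Finset.univ.filter (fun i => κ i ≠ 0)).card ≤ 2 := by
      by_contra hcon
      push_neg at hcon
      rw [show 2 < _ ↔ _ from Finset.two_lt_card_iff] at hcon
      obtain ⟨a, b, c, haf, hbf, hcf, hab, hac, hbc⟩ := hcon
      simp only [Finset.mem_filter] at haf hbf hcf
      exact hcf.2 (hex a b c hab hac hbc haf.2 hbf.2)
    have hmcard : (Finset.univ.filter (fun i => μ i ≠ 0)).card ≤ 2 := by
      by_contra hcon
      push_neg at hcon
      rw [show 2 < _ ↔ _ from Finset.two_lt_card_iff] at hcon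
      obtain ⟨a, b, c, haf, hbf, hcf, hab, hac, hbc⟩ := hcon
      simp only [Finset.mem_filter] at haf hbf hcf
      have hab' : κ a * κ b ≠ 0 := by
        rw [h a b hab]; exact mul_ne_zero haf.2 hbf.2
      have hac' : κ a * κ c ≠ 0 := by
        rw [h a c hac]; exact mul_ne_zero haf.2 hcf.2
      exact (fun h0 => hac' (by rw [h0, mul_zero]))
        (hex a b c hab hac hbc
          (fun h0 => hab' (by rw [h0, zero_mul]))
          (fun h0 => hab' (by rw [h0, mul_zero])))
    have h2l : (2 : ℕ) < 2 * l := by omega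
    rw [esymm_zero_of_small_support n (2 * l) κ (by omega),
        esymm_zero_of_small_support n (2 * l) μ (by omega), zero_mul, zero_mul]
end

section
/- Let n, l be natural numbers with l ≥ 2, let κ, μ : Fin n → ℝ satisfy κ_α · κ_β = μ_α · μ_β for all indices α ≠ β, let S ⊆ Fin n be a subset of cardinality 2l, and let j be any index in Fin n. Then κ_j² · ∏_{α ∈ S} κ_α = μ_j² · ∏_{α ∈ S} μ_α. -/
lemma even_prod_eq (n : ℕ) (κ μ : Fin n → ℝ)
    (h : ∀ α β : Fin n, α ≠ β → κ α * κ β = μ α * μ β) :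
    ∀ T : Finset (Fin n), Even T.card → ∏ α ∈ T, κ α = ∏ α ∈ T, μ α := by
  intro T
  induction T using Finset.strongInduction with
  | _ T ih =>
    intro hT
    rcases T.eq_empty_or_nonempty with rfl | ⟨a, ha⟩
    · simp
    · have hne : T.card ≠ 0 := Finset.card_ne_zero_of_mem ha
      have h2 : 2 ≤ T.card := by
        rcases hT with ⟨k, hk⟩; omega
      have hb : (T.erase a).Nonempty := by
        rw [← Finset.card_pos, Finset.card_erase_of_mem ha]; omega
      obtain ⟨b, hb⟩ := hb
      have hba : b ≠ a := Finset.ne_of_mem_erase hb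
      set R := (T.erase a).erase b with hR
      have hRT : R ⊂ T := by
        refine Finset.ssubset_of_subset_of_ssubset ?_ (Finset.erase_ssubset ha)
        exact Finset.erase_subset _ _
      have hcardR : R.card = T.card - 2 := by
        rw [hR, Finset.card_erase_of_mem hb, Finset.card_erase_of_mem ha]; omega
      have hRE : Even R.card := by
        rcases hT with ⟨k, hk⟩
        rw [hcardR]
        refine ⟨k - 1, by omega⟩
      have key := ih R hRT hRE
      rw [← Finset.mul_prod_erase T κ ha, ← Finset.mul_prod_erase _ κ hb,
          ← Finset.mul_prod_erase T μ ha, ← Finset.mul_prod_erase _ μ hb, ← hR, key,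
          ← mul_assoc, ← mul_assoc, h a b (Ne.symm hba)]

theorem stmt_13 (n l : ℕ) (hl : 2 ≤ l) (κ μ : Fin n → ℝ)
    (h : ∀ α β : Fin n, α ≠ β → κ α * κ β = μ α * μ β)
    (S : Finset (Fin n)) (hS : S.card = 2 * l) (j : Fin n) :
    (κ j) ^ 2 * ∏ α ∈ S, κ α = (μ j) ^ 2 * ∏ α ∈ S, μ α := by
  by_cases hjS : j ∈ S
  · -- j ∈ S
    set S' := S.erase j with hS'
    have hcS' : S'.card = 2 * l - 1 := by rw [hS', Finset.card_erase_of_mem hjS, hS]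
    have ha : S'.Nonempty := by rw [← Finset.card_pos]; omega
    obtain ⟨a, ha⟩ := ha
    have hb : (S'.erase a).Nonempty := by
      rw [← Finset.card_pos, Finset.card_erase_of_mem ha]; omega
    obtain ⟨b, hb⟩ := hb
    have hc : ((S'.erase a).erase b).Nonempty := by
      rw [← Finset.card_pos, Finset.card_erase_of_mem hb, Finset.card_erase_of_mem ha]; omega
    obtain ⟨c, hc⟩ := hc
    set R := ((S'.erase a).erase b).erase c with hR
    have hcardR : R.card = 2 * l - 4 := by
      rw [hR, Finset.card_erase_of_mem hc, Finset.card_erase_of_mem hb,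
        Finset.card_erase_of_mem ha, hcS']; omega
    have hRE : Even R.card := by rw [hcardR]; exact ⟨l - 2, by omega⟩
    have key := even_prod_eq n κ μ h R hRE
    have hja : j ≠ a := fun e => (Finset.ne_of_mem_erase ha) e.symm
    have hjb : j ≠ b := by
      have : b ∈ S' := Finset.mem_of_mem_erase hb
      exact fun e => (Finset.ne_of_mem_erase this) e.symm
    have hjc : j ≠ c := by
      have : c ∈ S' := Finset.mem_of_mem_erase (Finset.mem_of_mem_erase hc)
      exact fun e => (Finset.ne_of_mem_erase this) e.symm
    have e1 : (κ j)^2 * ∏ α ∈ S, κ α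
        = (κ j * κ a) * ((κ j * κ b) * ((κ j * κ c) * ∏ α ∈ R, κ α)) := by
      rw [← Finset.mul_prod_erase S κ hjS, ← hS', ← Finset.mul_prod_erase S' κ ha,
        ← Finset.mul_prod_erase _ κ hb, ← Finset.mul_prod_erase _ κ hc, ← hR]; ring
    have e2 : (μ j)^2 * ∏ α ∈ S, μ α
        = (μ j * μ a) * ((μ j * μ b) * ((μ j * μ c) * ∏ α ∈ R, μ α)) := by
      rw [← Finset.mul_prod_erase S μ hjS, ← hS', ← Finset.mul_prod_erase S' μ ha,
        ← Finset.mul_prod_erase _ μ hb, ← Finset.mul_prod_erase _ μ hc, ← hR]; ring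
    rw [e1, e2, h j a hja, h j b hjb, h j c hjc, key]
  · -- j ∉ S
    have ha : S.Nonempty := by rw [← Finset.card_pos]; omega
    obtain ⟨a, ha⟩ := ha
    have hb : (S.erase a).Nonempty := by
      rw [← Finset.card_pos, Finset.card_erase_of_mem ha]; omega
    obtain ⟨b, hb⟩ := hb
    set R := (S.erase a).erase b with hR
    have hcardR : R.card = 2 * l - 2 := by
      rw [hR, Finset.card_erase_of_mem hb, Finset.card_erase_of_mem ha, hS]; omega
    have hRE : Even R.card := by rw [hcardR]; exact ⟨l - 1, by omega⟩
    have key := even_prod_eq n κ μ h R hRE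
    have hja : j ≠ a := fun e => hjS (e ▸ ha)
    have hjb : j ≠ b := fun e => hjS (e ▸ (Finset.mem_of_mem_erase hb))
    have e1 : (κ j)^2 * ∏ α ∈ S, κ α
        = (κ j * κ a) * ((κ j * κ b) * ∏ α ∈ R, κ α) := by
      rw [← Finset.mul_prod_erase S κ ha, ← Finset.mul_prod_erase _ κ hb, ← hR]; ring
    have e2 : (μ j)^2 * ∏ α ∈ S, μ α
        = (μ j * μ a) * ((μ j * μ b) * ∏ α ∈ R, μ α) := by
      rw [← Finset.mul_prod_erase S μ ha, ← Finset.mul_prod_erase _ μ hb, ← hR]; ring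
    rw [e1, e2, h j a hja, h j b hjb, key]
end

section
/- Let n, k be natural numbers with k ≥ 1, let κ, μ : Fin n → ℝ satisfy κ_α · κ_β = μ_α · μ_β for all indices α ≠ β, and let i be an index in Fin n. Then κ_i² · σ_{2k}(κ|i) = μ_i² · σ_{2k}(μ|i), where σ_m(κ|i) denotes the m-th elementary symmetric function of the entries of κ with the i-th entry removed. -/
/-- The `m`-th elementary symmetric function of the family `κ : Fin n → ℝ`
with the `i`-th entry removed: the sum over all `m`-element subsets `S` of
`Fin n \ {i}` of `∏ j ∈ S, κ j`. -/
noncomputable def esymmFunErase (n m : ℕ) (κ : Fin n → ℝ) (i : Fin n) : ℝ :=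
  ∑ S ∈ Finset.powersetCard m ((Finset.univ : Finset (Fin n)).erase i), ∏ j ∈ S, κ j

lemma prod_even_eq {n : ℕ} (κ μ : Fin n → ℝ)
    (h : ∀ α β : Fin n, α ≠ β → κ α * κ β = μ α * μ β) :
    ∀ T : Finset (Fin n), Even T.card → ∏ j ∈ T, κ j = ∏ j ∈ T, μ j := by
  intro T
  induction T using Finset.strongInductionOn with
  | _ T ih =>
    intro hT
    rcases T.eq_empty_or_nonempty with rfl | ⟨a, ha⟩
    · simp
    · have hne : T.card ≠ 0 := Finset.card_ne_zero_of_mem ha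
      have h2 : 2 ≤ T.card := by
        rcases hT with ⟨m, hm⟩; omega
      have hbne : (T.erase a).Nonempty := by
        rw [← Finset.card_pos, Finset.card_erase_of_mem ha]; omega
      obtain ⟨b, hb⟩ := hbne
      have hab : b ≠ a := Finset.ne_of_mem_erase hb
      have hbT : b ∈ T := Finset.mem_of_mem_erase hb
      rw [← Finset.mul_prod_erase _ κ ha, ← Finset.mul_prod_erase _ κ hb, ← mul_assoc,
          ← Finset.mul_prod_erase _ μ ha, ← Finset.mul_prod_erase _ μ hb, ← mul_assoc]
      have hss : (T.erase a).erase b ⊂ T :=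
        Finset.ssubset_of_subset_of_ssubset (Finset.erase_subset _ _)
          (Finset.erase_ssubset ha)
      have hcard : ((T.erase a).erase b).card = T.card - 2 := by
        rw [Finset.card_erase_of_mem hb, Finset.card_erase_of_mem ha]; omega
      congr 1
      · exact h a b (Ne.symm hab)
      · apply ih _ hss
        rw [hcard, Nat.even_sub h2]
        simpa using hT
  
theorem stmt_14 (n k : ℕ) (hk : 1 ≤ k) (κ μ : Fin n → ℝ)
    (h : ∀ α β : Fin n, α ≠ β → κ α * κ β = μ α * μ β) (i : Fin n) :
    (κ i) ^ 2 * esymmFunErase n (2 * k) κ i = (μ i) ^ 2 * esymmFunErase n (2 * k) μ i := by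
  unfold esymmFunErase
  rw [Finset.mul_sum, Finset.mul_sum]
  apply Finset.sum_congr rfl
  intro S hS
  rw [Finset.mem_powersetCard] at hS
  obtain ⟨hSsub, hScard⟩ := hS
  have hiS : i ∉ S := fun hi => (Finset.mem_erase.mp (hSsub hi)).1 rfl
  have hSne : S.Nonempty := by
    rw [← Finset.card_pos, hScard]; omega
  obtain ⟨a, ha⟩ := hSne
  have hia : i ≠ a := fun e => hiS (e ▸ ha)
  have hinotin : i ∉ S.erase a := fun hi => hiS (Finset.mem_of_mem_erase hi)
  have key1 : κ i * κ a = μ i * μ a := h i a hia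
  have key2 : ∏ j ∈ insert i (S.erase a), κ j = ∏ j ∈ insert i (S.erase a), μ j := by
    apply prod_even_eq κ μ h
    rw [Finset.card_insert_of_notMem hinotin, Finset.card_erase_of_mem ha, hScard]
    exact ⟨k, by omega⟩
  rw [Finset.prod_insert hinotin, Finset.prod_insert hinotin] at key2
  calc κ i ^ 2 * ∏ j ∈ S, κ j
      = (κ i * κ a) * (κ i * ∏ j ∈ S.erase a, κ j) := by
        rw [← Finset.mul_prod_erase _ κ ha]; ring
    _ = (μ i * μ a) * (μ i * ∏ j ∈ S.erase a, μ j) := by rw [key1, key2]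
    _ = μ i ^ 2 * ∏ j ∈ S, μ j := by
        rw [← Finset.mul_prod_erase _ μ ha]; ring
end

section
/- Let n, l be natural numbers, let κ, μ : Fin n → ℝ satisfy κ_α · κ_β = μ_α · μ_β for all indices α ≠ β, and let i be an index in Fin n. Then κ_i · σ_{2l+1}(κ|i) = μ_i · σ_{2l+1}(μ|i), where σ_m(κ|i) denotes the m-th elementary symmetric function of the entries of κ with the i-th entry removed. -/
theorem stmt_15 (n l : ℕ) (κ μ : Fin n → ℝ)
    (h : ∀ α β : Fin n, α ≠ β → κ α * κ β = μ α * μ β) (i : Fin n) :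
    κ i * esymmFunErase n (2 * l + 1) κ i = μ i * esymmFunErase n (2 * l + 1) μ i := by
  have aux : ∀ m : ℕ, ∀ T : Finset (Fin n), T.card = 2 * m →
      ∏ j ∈ T, κ j = ∏ j ∈ T, μ j := by
    intro m
    induction m with
    | zero =>
      intro T hT
      simp [Finset.card_eq_zero.mp hT]
    | succ m ih =>
      intro T hT
      obtain ⟨a, ha⟩ : T.Nonempty := Finset.card_pos.mp (by omega)
      have hc : (T.erase a).card = 2 * m + 1 := by
        rw [Finset.card_erase_of_mem ha]; omega
      obtain ⟨b, hb⟩ : (T.erase a).Nonempty := Finset.card_pos.mp (by omega)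
      have hab : a ≠ b := (Finset.ne_of_mem_erase hb).symm
      have hc2 : ((T.erase a).erase b).card = 2 * m := by
        rw [Finset.card_erase_of_mem hb]; omega
      rw [← Finset.mul_prod_erase T κ ha, ← Finset.mul_prod_erase T μ ha,
        ← Finset.mul_prod_erase (T.erase a) κ hb, ← Finset.mul_prod_erase (T.erase a) μ hb,
        ← mul_assoc, ← mul_assoc, h a b hab, ih _ hc2]
  unfold esymmFunErase
  rw [Finset.mul_sum, Finset.mul_sum]
  refine Finset.sum_congr rfl fun S hS => ?_
  rw [Finset.mem_powersetCard] at hS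
  have hi : i ∉ S := fun hmem => Finset.notMem_erase i _ (hS.1 hmem)
  rw [← Finset.prod_insert hi, ← Finset.prod_insert hi]
  exact aux (l + 1) _ (by rw [Finset.card_insert_of_notMem hi, hS.2]; ring)
end
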